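/- arXiv:2506.09531 — 3 statements merged into one kernel-verified Lean document; each statement's English description precedes it below -/
import Mathlib

section
/- Let R(z) = A · Π_{i=1}^{s}(z + α_i)^{n_i} / Π_{i=1}^{t}(z + β_i)^{m_i} be a rational function (A ≠ 0, the α_i distinct, the β_i distinct, and no α_i equal to any β_j), and let Q[R] = R^{p_0} (R^{p_1})^{(q_1)} ⋯ (R^{p_k})^{(q_k)} with degree d = p_0 + Σ p_i and weight w = d + Σ q_i. Then Q[R] can be written in the form Q[R](z) = A' · Π_{i=1}^{s}(z + α_i)^{(n_i + 1)d − w} / Π_{i=1}^{t}(z + β_i)^{(m_i − 1)d + w} · G(z), where G is a polynomial of degree at most (s + t − 1)(w − d). -/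
/-!
Write `R = A ∏ (z + cᵢ)^{νᵢ}` with `c = (α, β)` and `ν = (n, -m)`. Off the poles, the
derivative of `∏ (z + cᵢ)^{eᵢ} · N(z)` is `∏ (z + cᵢ)^{eᵢ - 1} · (Λₑ N + Φ N')(z)`, where
`Φ = ∏ (X + cᵢ)` and `Λₑ = Σ eᵢ ∏_{j ≠ i} (X + c_j)` is the numerator of the logarithmic
derivative `Σ eᵢ / (X + cᵢ)`. Both `N ↦ Λₑ N` and `N ↦ Φ N'` raise the degree by at most
`s + t - 1`, so `(R^p)^{(q)} = A^p ∏ (z + cᵢ)^{pνᵢ - q} · N_q` with `deg N_q ≤ q (s + t - 1)`.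
In the product `Q[R]` the exponents add up to `dνᵢ - (w - d)`, which is `(nᵢ + 1)d - w` at `αᵢ`
and `-((mⱼ - 1)d + w)` at `βⱼ`, and `G = ∏ N_{q_a}` has degree at most `(s + t - 1)(w - d)`.
-/

/-- The differential polynomial `Q[f] = f^{p₀} (f^{p₁})^{(q₁)} ⋯ (f^{p_k})^{(q_k)}`. -/
noncomputable def Qop (p₀ k : ℕ) (p q : Fin k → ℕ) (f : ℂ → ℂ) : ℂ → ℂ :=
  fun z => f z ^ p₀ * ∏ i, iteratedDeriv (q i) (fun w => f w ^ p i) z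

open Polynomial Finset Filter Topology

noncomputable section

variable {𝕜 ι : Type*}

theorem prod_zpow_eq_prod_zpow_sub_one_mul [Field 𝕜] {s : Finset ι} {x : ι → 𝕜}
    (hx : ∀ i ∈ s, x i ≠ 0) (e : ι → ℤ) :
    ∏ i ∈ s, x i ^ e i = (∏ i ∈ s, x i ^ (e i - 1)) * ∏ i ∈ s, x i := by
  rw [← prod_mul_distrib]
  exact prod_congr rfl fun i hi => by rw [← zpow_add_one₀ (hx i hi), sub_add_cancel]

variable [Fintype ι]

def prodZPow [Field 𝕜] (c : ι → 𝕜) (e : ι → ℤ) (z : 𝕜) : 𝕜 := ∏ i, (z + c i) ^ e i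

def nodePoly [CommRing 𝕜] (c : ι → 𝕜) : 𝕜[X] := ∏ i, (X + C (c i))

def logDerivNumerator [CommRing 𝕜] [DecidableEq ι] (c : ι → 𝕜) (e : ι → ℤ) : 𝕜[X] :=
  ∑ i, C (e i : 𝕜) * ∏ j ∈ univ.erase i, (X + C (c j))

def derivNumerator [CommRing 𝕜] [DecidableEq ι] (c : ι → 𝕜) (e : ι → ℤ) : ℕ → 𝕜[X]
  | 0 => 1
  | q + 1 => logDerivNumerator c (fun i => e i - q) * derivNumerator c e q
      + nodePoly c * derivative (derivNumerator c e q)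

section Field

variable [Field 𝕜] {c : ι → 𝕜} {z : 𝕜}

theorem prodZPow_add (hz : ∀ i, z + c i ≠ 0) (e f : ι → ℤ) :
    prodZPow c (fun i => e i + f i) z = prodZPow c e z * prodZPow c f z := by
  simp only [prodZPow, ← prod_mul_distrib, zpow_add₀ (hz _)]

theorem prod_prodZPow (hz : ∀ i, z + c i ≠ 0) {κ : Type*} (s : Finset κ) (e : κ → ι → ℤ) :
    ∏ a ∈ s, prodZPow c (e a) z = prodZPow c (fun i => ∑ a ∈ s, e a i) z := by
  classical
  induction s using Finset.induction_on with
  | empty => simp [prodZPow]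
  | insert a s ha ih => simp only [prod_insert ha, sum_insert ha, prodZPow_add hz, ih]

theorem prodZPow_pow (c : ι → 𝕜) (e : ι → ℤ) (z : 𝕜) (P : ℕ) :
    prodZPow c e z ^ P = prodZPow c (fun i => P * e i) z := by
  rw [prodZPow, prodZPow, ← prod_pow]
  refine prod_congr rfl fun i _ => ?_
  rw [← zpow_natCast, ← zpow_mul, mul_comm]

theorem prodZPow_eq_mul_eval_nodePoly (hz : ∀ i, z + c i ≠ 0) (e : ι → ℤ) :
    prodZPow c e z = prodZPow c (fun i => e i - 1) z * (nodePoly c).eval z := by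
  simp only [prodZPow, nodePoly, eval_prod, eval_add, eval_X, eval_C]
  exact prod_zpow_eq_prod_zpow_sub_one_mul (fun i _ => hz i) e

theorem prodZPow_neg (c : ι → 𝕜) (e : ι → ℤ) (z : 𝕜) :
    prodZPow c (fun i => -e i) z = (prodZPow c e z)⁻¹ := by
  simp only [prodZPow, zpow_neg, prod_inv_distrib]

theorem prodZPow_sumElim {κ : Type*} [Fintype κ] (a : ι → 𝕜) (b : κ → 𝕜) (e : ι ⊕ κ → ℤ)
    (z : 𝕜) :
    prodZPow (Sum.elim a b) e z = prodZPow a (e ∘ Sum.inl) z * prodZPow b (e ∘ Sum.inr) z :=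
  Fintype.prod_sum_type (fun x => (z + Sum.elim a b x) ^ e x)

end Field

section Degree

variable [CommRing 𝕜] (c : ι → 𝕜)

theorem natDegree_nodePoly_le : (nodePoly c).natDegree ≤ Fintype.card ι :=
  (natDegree_prod_le _ _).trans (by simpa using Nat.mul_le_mul_left _ natDegree_X_le)

variable [DecidableEq ι]

theorem natDegree_logDerivNumerator_le (e : ι → ℤ) :
    (logDerivNumerator c e).natDegree ≤ Fintype.card ι - 1 := by
  refine natDegree_sum_le_of_forall_le _ _ fun i _ => natDegree_C_mul_le _ _ |>.trans ?_
  refine (natDegree_prod_le _ _).trans ?_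
  simpa [card_erase_of_mem] using Nat.mul_le_mul_left _ natDegree_X_le

theorem natDegree_mul_derivative_le (P N : 𝕜[X]) :
    (P * derivative N).natDegree ≤ N.natDegree + (P.natDegree - 1) := by
  rcases eq_or_ne N.natDegree 0 with hN | hN
  · simp [derivative_of_natDegree_zero hN]
  · have hlt := natDegree_derivative_lt hN
    have hmul := natDegree_mul_le (p := P) (q := derivative N)
    omega

theorem natDegree_derivNumerator_le (e : ι → ℤ) (q : ℕ) :
    (derivNumerator c e q).natDegree ≤ q * (Fintype.card ι - 1) := by
  induction q with
  | zero => simp [derivNumerator]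
  | succ q ih =>
    have hΛ := natDegree_mul_le (p := logDerivNumerator c (fun i => e i - q))
      (q := derivNumerator c e q)
    have hΦ := natDegree_mul_derivative_le (nodePoly c) (derivNumerator c e q)
    have hΛle := natDegree_logDerivNumerator_le c (fun i => e i - q)
    have hΦle := natDegree_nodePoly_le c
    refine (natDegree_add_le _ _).trans (max_le ?_ ?_) <;> rw [add_mul, one_mul] <;> omega

end Degree

section Deriv

variable [NontriviallyNormedField 𝕜] [DecidableEq ι] {c : ι → 𝕜} {z : 𝕜}

theorem hasDerivAt_prodZPow (hz : ∀ i, z + c i ≠ 0) (e : ι → ℤ) :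
    HasDerivAt (prodZPow c e)
      (prodZPow c (fun i => e i - 1) z * (logDerivNumerator c e).eval z) z := by
  have hfactor (i : ι) : HasDerivAt (fun w => (w + c i) ^ e i) (e i * (z + c i) ^ (e i - 1)) z :=
    (hasDerivAt_zpow (e i) _ (Or.inl (hz i))).comp_add_const z (c i)
  refine (HasDerivAt.fun_finsetProd (u := univ) fun i _ => hfactor i).congr_deriv ?_
  simp only [logDerivNumerator, eval_finsetSum, eval_mul, eval_C, eval_prod, eval_add, eval_X,
    mul_sum, smul_eq_mul]
  refine sum_congr rfl fun i hi => ?_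
  rw [prodZPow, ← prod_erase_mul _ _ hi,
    prod_zpow_eq_prod_zpow_sub_one_mul (fun j _ => hz j)]
  ring

theorem hasDerivAt_prodZPow_mul_eval (hz : ∀ i, z + c i ≠ 0) (e : ι → ℤ) (N : 𝕜[X]) :
    HasDerivAt (fun w => prodZPow c e w * N.eval w)
      (prodZPow c (fun i => e i - 1) z *
        (logDerivNumerator c e * N + nodePoly c * derivative N).eval z) z := by
  refine ((hasDerivAt_prodZPow hz e).mul (N.hasDerivAt z)).congr_deriv ?_
  rw [prodZPow_eq_mul_eval_nodePoly hz e, eval_add, eval_mul, eval_mul]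
  ring

theorem iteratedDeriv_const_mul_prodZPow (B : 𝕜) (e : ι → ℤ) (q : ℕ) (hz : ∀ i, z + c i ≠ 0) :
    iteratedDeriv q (fun w => B * prodZPow c e w) z
      = B * prodZPow c (fun i => e i - q) z * (derivNumerator c e q).eval z := by
  induction q generalizing z with
  | zero => simp [derivNumerator]
  | succ q ih =>
    have hnear : iteratedDeriv q (fun w => B * prodZPow c e w) =ᶠ[𝓝 z]
        fun w => B * (prodZPow c (fun i => e i - q) w * (derivNumerator c e q).eval w) := by
      have hpoles : ∀ᶠ w in 𝓝 z, ∀ i, w + c i ≠ 0 := eventually_all.2 fun i =>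
        (continuous_add_const (c i)).continuousAt.eventually_ne (hz i)
      filter_upwards [hpoles] with w hw
      rw [ih hw, mul_assoc]
    rw [iteratedDeriv_succ, hnear.deriv_eq,
      ((hasDerivAt_prodZPow_mul_eval hz _ _).const_mul B).deriv]
    simp only [derivNumerator, Nat.cast_succ, sub_add_eq_sub_sub]
    ring

end Deriv

theorem Qop_const_mul_prodZPow [DecidableEq ι] {c : ι → ℂ} {z : ℂ} (hz : ∀ i, z + c i ≠ 0)
    (B : ℂ) (e : ι → ℤ) (p₀ k : ℕ) (p q : Fin k → ℕ) :
    Qop p₀ k p q (fun w => B * prodZPow c e w) z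
      = B ^ (p₀ + ∑ a, p a) * prodZPow c (fun i => (p₀ + ∑ a, p a : ℕ) * e i - ∑ a, q a) z *
        ∏ a, (derivNumerator c (fun i => p a * e i) (q a)).eval z := by
  have hpow (P : ℕ) : (fun w => (B * prodZPow c e w) ^ P)
      = fun w => B ^ P * prodZPow c (fun i => P * e i) w := by
    simp only [mul_pow, prodZPow_pow]
  have hexp : (fun i => (p₀ + ∑ a, p a : ℕ) * e i - ∑ a, q a : ι → ℤ)
      = fun i => p₀ * e i + ∑ a, (p a * e i - q a) := by
    funext i
    rw [sum_sub_distrib, ← sum_mul]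
    push_cast
    ring
  simp only [Qop, hpow, iteratedDeriv_const_mul_prodZPow _ _ _ hz, prod_mul_distrib,
    prod_pow_eq_pow_sum, prod_prodZPow hz]
  rw [mul_pow, prodZPow_pow, pow_add, hexp, prodZPow_add hz]
  ring

end

theorem stmt5_general (s t : ℕ) (A : ℂ)
    (α : Fin s → ℂ) (β : Fin t → ℂ)
    (n : Fin s → ℕ) (m : Fin t → ℕ)
    (k p₀ : ℕ) (p q : Fin k → ℕ)
    (d w : ℕ) (hd : d = p₀ + ∑ i, p i) (hw : w = d + ∑ i, q i) :
    ∃ (A' : ℂ) (G : Polynomial ℂ), G.natDegree ≤ (s + t - 1) * (w - d) ∧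
      ∀ z : ℂ, (∀ i, z + α i ≠ 0) → (∀ i, z + β i ≠ 0) →
        Qop p₀ k p q (fun w' => A * (∏ i, (w' + α i) ^ n i) / ∏ i, (w' + β i) ^ m i) z =
          A' * (∏ i, (z + α i) ^ (((n i : ℤ) + 1) * d - w)) /
            (∏ i, (z + β i) ^ (((m i : ℤ) - 1) * d + w)) * G.eval z := by
  set c := Sum.elim α β
  set ν : Fin s ⊕ Fin t → ℤ := Sum.elim (fun i => n i) (fun j => -m j)
  have hR : (fun w' => A * (∏ i, (w' + α i) ^ n i) / ∏ i, (w' + β i) ^ m i)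
      = fun w' => A * prodZPow c ν w' := by
    funext w'
    rw [prodZPow_sumElim, Sum.elim_comp_inl, Sum.elim_comp_inr, prodZPow_neg]
    simp only [prodZPow, zpow_natCast, div_eq_mul_inv, mul_assoc]
  refine ⟨A ^ d, ∏ a, derivNumerator c (fun i => p a * ν i) (q a), ?_, fun z hzα hzβ => ?_⟩
  · calc (∏ a, derivNumerator c (fun i => p a * ν i) (q a)).natDegree
        ≤ ∑ a, (derivNumerator c (fun i => p a * ν i) (q a)).natDegree := natDegree_prod_le _ _
      _ ≤ ∑ a, q a * (s + t - 1) :=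
        sum_le_sum fun a _ => by simpa using natDegree_derivNumerator_le c _ (q a)
      _ = (s + t - 1) * (w - d) := by rw [← sum_mul, hw, Nat.add_sub_cancel_left, mul_comm]
  · have hz : ∀ i, z + c i ≠ 0 := Sum.forall.2 ⟨hzα, hzβ⟩
    have hexp : (fun i => (d : ℤ) * ν i - ∑ a, q a)
        = Sum.elim (fun i => ((n i : ℤ) + 1) * d - w) (fun j => -(((m j : ℤ) - 1) * d + w)) := by
      funext i
      cases i <;> simp only [ν, Sum.elim_inl, Sum.elim_inr, hw] <;> push_cast <;> ring
    rw [hR, Qop_const_mul_prodZPow hz, ← hd, eval_prod, hexp, prodZPow_sumElim,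
      Sum.elim_comp_inl, Sum.elim_comp_inr, prodZPow_neg, prodZPow, prodZPow, div_eq_mul_inv]
    ring

/-- For a rational function `R(z) = A Π (z+αᵢ)^{nᵢ} / Π (z+βᵢ)^{mᵢ}`, the differential
polynomial `Q[R]` has the form
`A' Π (z+αᵢ)^{(nᵢ+1)d-w} / Π (z+βᵢ)^{(mᵢ-1)d+w} · G(z)` with `G` a polynomial of
degree at most `(s+t-1)(w-d)`. -/
theorem stmt5 (s t : ℕ) (hs : 1 ≤ s) (ht : 1 ≤ t) (A : ℂ) (hA : A ≠ 0)
    (α : Fin s → ℂ) (β : Fin t → ℂ) (hα : Function.Injective α) (hβ : Function.Injective β)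
    (hαβ : ∀ i j, α i ≠ β j)
    (n : Fin s → ℕ) (m : Fin t → ℕ) (hn : ∀ i, 1 ≤ n i) (hm : ∀ i, 1 ≤ m i)
    (k p₀ : ℕ) (p q : Fin k → ℕ) (hpq : ∀ i, q i ≤ p i) (hq : 0 < ∑ i, q i)
    (d w : ℕ) (hd : d = p₀ + ∑ i, p i) (hw : w = d + ∑ i, q i) :
    ∃ (A' : ℂ) (G : Polynomial ℂ), G.natDegree ≤ (s + t - 1) * (w - d) ∧
      ∀ z : ℂ, (∀ i, z + α i ≠ 0) → (∀ i, z + β i ≠ 0) →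
        Qop p₀ k p q (fun w' => A * (∏ i, (w' + α i) ^ n i) / ∏ i, (w' + β i) ^ m i) z =
          A' * (∏ i, (z + α i) ^ (((n i : ℤ) + 1) * d - w)) /
            (∏ i, (z + β i) ^ (((m i : ℤ) - 1) * d + w)) * G.eval z :=
  stmt5_general s t A α β n m k p₀ p q d w hd hw
end

section
/- Let R be a rational function of the form R(z) = A · Π_{i=1}^{s}(z + α_i)^{n_i} / Π_{i=1}^{t}(z + β_i)^{m_i} with N = Σ n_i, M = Σ m_i and M − N ≥ t, let h be a nonzero polynomial, and let Q[R] = R^{p_0}(R^{p_1})^{(q_1)} ⋯ (R^{p_k})^{(q_k)} be a differential polynomial of weight w (where p_i ≥ q_i and Σ q_i > 0). Then Q[R] − h has at least w distinct zeros in ℂ. -/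
open Polynomial Filter Topology

section RootCount

variable {R : Type*} [CommRing R]

theorem pow_sub_one_dvd_wronskian_left {q a : R[X]} {n : ℕ} (h : q ^ n ∣ a) (b : R[X]) :
    q ^ (n - 1) ∣ wronskian a b :=
  dvd_sub (((pow_dvd_pow q n.pred_le).trans h).mul_right _)
    ((pow_sub_one_dvd_derivative_of_pow_dvd h).mul_right _)

theorem pow_sub_one_dvd_wronskian_right {q b : R[X]} {n : ℕ} (h : q ^ n ∣ b) (a : R[X]) :
    q ^ (n - 1) ∣ wronskian a b := by
  rw [← wronskian_neg_eq, dvd_neg]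
  exact pow_sub_one_dvd_wronskian_left h a

theorem wronskian_ne_zero_of_natDegree_lt [IsDomain R] [CharZero R] {a b : R[X]} (ha : a ≠ 0)
    (hab : a.natDegree < b.natDegree) : wronskian a b ≠ 0 := by
  have hb : b ≠ 0 := by rintro rfl; simp at hab
  intro hw
  have hlc := congrArg leadingCoeff (sub_eq_zero.mp hw)
  simp only [leadingCoeff_mul, leadingCoeff_derivative] at hlc
  have : (b.natDegree - a.natDegree : R) * (a.leadingCoeff * b.leadingCoeff) = 0 := by
    linear_combination hlc
  rcases mul_eq_zero.mp this with h | h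
  · exact hab.ne' (by exact_mod_cast sub_eq_zero.mp h)
  · exact mul_ne_zero (leadingCoeff_ne_zero.mpr ha) (leadingCoeff_ne_zero.mpr hb) h

theorem rootMultiplicity_eq_zero_or_of_isCoprime [IsDomain R] {f g : R[X]} (hfg : IsCoprime f g)
    (z : R) : rootMultiplicity z f = 0 ∨ rootMultiplicity z g = 0 := by
  rcases aeval_ne_zero_of_isCoprime hfg z with h | h
  · exact .inl (rootMultiplicity_eq_zero (by simpa [IsRoot] using h))
  · exact .inr (rootMultiplicity_eq_zero (by simpa [IsRoot] using h))

variable {K : Type*} [Field K]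

theorem natDegree_le_natDegree_add_card_roots_toFinset [IsAlgClosed K] [DecidableEq K]
    {f W : K[X]} (hW : W ≠ 0) (hdvd : ∀ z, (X - C z) ^ (rootMultiplicity z f - 1) ∣ W) :
    f.natDegree ≤ W.natDegree + f.roots.toFinset.card := by
  have hprod : ∏ z ∈ f.roots.toFinset, (X - C z) ^ (rootMultiplicity z f - 1) ∣ W :=
    Finset.prod_dvd_of_coprime
      (fun z _ z' _ hzz' => ((pairwise_coprime_X_sub_C Function.injective_id) hzz').pow)
      (fun z _ => hdvd z)
  have hdeg := natDegree_le_of_dvd hprod hW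
  rw [natDegree_prod _ _ (fun z _ => pow_ne_zero _ (X_sub_C_ne_zero z))] at hdeg
  simp only [natDegree_pow, natDegree_X_sub_C, mul_one] at hdeg
  have hsum : ∑ z ∈ f.roots.toFinset, rootMultiplicity z f = f.natDegree := by
    simp_rw [← count_roots, Multiset.toFinset_sum_count_eq, IsAlgClosed.card_roots_eq_natDegree]
  have hpos : ∀ z ∈ f.roots.toFinset, 1 ≤ rootMultiplicity z f := fun z hz => by
    rw [← count_roots]; exact Multiset.one_le_count_iff_mem.mpr (Multiset.mem_toFinset.mp hz)
  have hsplit : ∑ z ∈ f.roots.toFinset, (rootMultiplicity z f - 1) + f.roots.toFinset.card =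
      f.natDegree := by
    rw [← hsum, Finset.card_eq_sum_ones, ← Finset.sum_add_distrib]
    exact Finset.sum_congr rfl fun z hz => Nat.sub_add_cancel (hpos z hz)
  omega

theorem natDegree_add_one_le_card_roots_sub_mul [IsAlgClosed K] [CharZero K] [DecidableEq K]
    {a g h : K[X]} (ha : a ≠ 0) (hag : IsCoprime a g) (hdeg : a.natDegree < (h * g).natDegree) :
    g.natDegree + 1 ≤ a.natDegree + (a - h * g).roots.toFinset.card + g.roots.toFinset.card := by
  have hhg : h * g ≠ 0 := by rintro hz; simp [hz] at hdeg
  have hg : g ≠ 0 := right_ne_zero_of_mul hhg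
  have hTdeg : (a - h * g).natDegree = (h * g).natDegree :=
    natDegree_sub_eq_right_of_natDegree_lt hdeg
  have hT : a - h * g ≠ 0 := by
    rintro hz; rw [hz, natDegree_zero] at hTdeg; omega
  have hTg : IsCoprime (a - h * g) g := IsCoprime.sub_mul_right_left_iff.mpr hag
  have hW : wronskian a (h * g) ≠ 0 := wronskian_ne_zero_of_natDegree_lt ha hdeg
  have hWT : wronskian a (h * g) = wronskian (a - h * g) (h * g) := by
    simp only [wronskian, derivative_sub]; ring
  have hdvd : ∀ z,
      (X - C z) ^ (rootMultiplicity z ((a - h * g) * g) - 1) ∣ wronskian a (h * g) := by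
    intro z
    rw [rootMultiplicity_mul (mul_ne_zero hT hg), hWT]
    rcases rootMultiplicity_eq_zero_or_of_isCoprime hTg z with h0 | h0
    · rw [h0, zero_add]
      exact pow_sub_one_dvd_wronskian_right ((pow_rootMultiplicity_dvd g z).mul_left h) _
    · rw [h0, add_zero]
      exact pow_sub_one_dvd_wronskian_left (pow_rootMultiplicity_dvd _ z) _
  have hcount := natDegree_le_natDegree_add_card_roots_toFinset hW hdvd
  rw [natDegree_mul hT hg, roots_mul (mul_ne_zero hT hg), Multiset.toFinset_add] at hcount
  have hunion := Finset.card_union_le (a - h * g).roots.toFinset g.roots.toFinset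
  have hWdeg := natDegree_wronskian_lt_add hW
  have hhgdeg := natDegree_mul (left_ne_zero_of_mul hhg) hg
  omega

end RootCount

section ProdXSubCPow

variable {K : Type*} [Field K] {ι : Type*} [Fintype ι]

noncomputable def prodXSubCPow (c : ι → K) (k : ι → ℕ) : K[X] :=
  ∏ j, (X - C (c j)) ^ k j

variable (c : ι → K)

theorem prodXSubCPow_ne_zero (k : ι → ℕ) : prodXSubCPow c k ≠ 0 :=
  Finset.prod_ne_zero_iff.mpr fun _ _ => pow_ne_zero _ (X_sub_C_ne_zero _)

theorem natDegree_prodXSubCPow (k : ι → ℕ) : (prodXSubCPow c k).natDegree = ∑ j, k j := by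
  rw [prodXSubCPow, natDegree_prod _ _ fun j _ => pow_ne_zero _ (X_sub_C_ne_zero _)]
  simp

theorem prodXSubCPow_mul (k l : ι → ℕ) :
    prodXSubCPow c k * prodXSubCPow c l = prodXSubCPow c (k + l) := by
  simp only [prodXSubCPow, ← Finset.prod_mul_distrib, Pi.add_apply, pow_add]

theorem prodXSubCPow_pow (k : ι → ℕ) (n : ℕ) :
    prodXSubCPow c k ^ n = prodXSubCPow c (fun j => k j * n) := by
  simp only [prodXSubCPow, ← Finset.prod_pow, pow_mul]

theorem eval_prodXSubCPow_ne_zero (k : ι → ℕ) {z : K} (hz : ∀ j, z ≠ c j) :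
    (prodXSubCPow c k).eval z ≠ 0 := by
  simp only [prodXSubCPow, eval_prod, eval_pow, eval_sub, eval_X, eval_C]
  exact Finset.prod_ne_zero_iff.mpr fun j _ => pow_ne_zero _ (sub_ne_zero.mpr (hz j))

theorem eval_prodXSubCPow_self {k : ι → ℕ} {j : ι} (hk : k j ≠ 0) :
    (prodXSubCPow c k).eval (c j) = 0 := by
  simp only [prodXSubCPow, eval_prod, eval_pow, eval_sub, eval_X, eval_C]
  exact Finset.prod_eq_zero (Finset.mem_univ j) (by simp [hk])

theorem card_roots_toFinset_prodXSubCPow_le [DecidableEq K] (k : ι → ℕ) :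
    (prodXSubCPow c k).roots.toFinset.card ≤ Fintype.card ι := by
  have hsub : (prodXSubCPow c k).roots.toFinset ⊆ Finset.univ.image c := by
    intro z hz
    rw [Multiset.mem_toFinset, mem_roots (prodXSubCPow_ne_zero c k)] at hz
    by_contra hzc
    exact eval_prodXSubCPow_ne_zero c k (fun j hj => hzc (by simp [hj])) hz
  exact (Finset.card_le_card hsub).trans Finset.card_image_le

theorem isCoprime_prodXSubCPow {F : K[X]} (hF : ∀ j, F.eval (c j) ≠ 0) (k : ι → ℕ) :
    IsCoprime F (prodXSubCPow c k) :=
  IsCoprime.prod_right fun j _ => IsCoprime.pow_right <|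
    ((irreducible_X_sub_C (c j)).coprime_iff_not_dvd.mpr
      (by simpa [dvd_iff_isRoot] using hF j)).symm

theorem prodXSubCPow_eq_X_sub_C_pow_mul [DecidableEq ι] (hc : Function.Injective c)
    (k : ι → ℕ) (j : ι) :
    ∃ U : K[X], prodXSubCPow c k = (X - C (c j)) ^ k j * U ∧ U.eval (c j) ≠ 0 := by
  refine ⟨∏ i ∈ Finset.univ.erase j, (X - C (c i)) ^ k i,
    (Finset.mul_prod_erase _ _ (Finset.mem_univ j)).symm, ?_⟩
  simp only [eval_prod, eval_pow, eval_sub, eval_X, eval_C]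
  exact Finset.prod_ne_zero_iff.mpr fun i hi =>
    pow_ne_zero _ (sub_ne_zero.mpr (hc.ne (Finset.ne_of_mem_erase hi).symm))

theorem exists_eq_prodXSubCPow_mul (hc : Function.Injective c) {k : ι → ℕ} {F : K[X]}
    (hF : ∀ j, ∃ U : K[X], F = (X - C (c j)) ^ k j * U ∧ U.eval (c j) ≠ 0) :
    ∃ F' : K[X], F = prodXSubCPow c k * F' ∧ ∀ j, F'.eval (c j) ≠ 0 := by
  classical
  obtain ⟨F', hF'⟩ : prodXSubCPow c k ∣ F :=
    Finset.prod_dvd_of_coprime (fun i _ j _ hij => ((pairwise_coprime_X_sub_C hc) hij).pow)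
      fun j _ => (hF j).imp fun U hU => hU.1
  refine ⟨F', hF', fun j hj => ?_⟩
  obtain ⟨U, hU, hUc⟩ := hF j
  obtain ⟨V, hV, hVc⟩ := prodXSubCPow_eq_X_sub_C_pow_mul c hc k j
  have hUV : U = V * F' := by
    apply mul_left_cancel₀ (pow_ne_zero (k j) (X_sub_C_ne_zero (c j)))
    rw [← hU, hF', hV, mul_assoc]
  exact hUc (by rw [hUV, eval_mul, hj, mul_zero])

end ProdXSubCPow

theorem derivative_pow_mul_self {R : Type*} [CommRing R] (G : R[X]) (n : ℕ) :
    derivative (G ^ n) * G = C (n : R) * G ^ n * derivative G := by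
  cases n with
  | zero => simp
  | succ n => rw [derivative_pow_succ, Nat.cast_succ, C_add, C_1, pow_succ]; ring

noncomputable def powDivDerivNum {R : Type*} [CommRing R] (P G : R[X]) (p : ℕ) : ℕ → R[X]
  | 0 => P ^ p
  | q + 1 => derivative (powDivDerivNum P G p q) * G -
      C ((p + q : ℕ) : R) * powDivDerivNum P G p q * derivative G

theorem iteratedDeriv_pow_div_eval {𝕜 : Type*} [NontriviallyNormedField 𝕜] (P G : 𝕜[X])
    (p q : ℕ) {z : 𝕜} (hz : G.eval z ≠ 0) :
    iteratedDeriv q (fun w => (P.eval w / G.eval w) ^ p) z =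
      (powDivDerivNum P G p q).eval z / G.eval z ^ (p + q) := by
  induction q generalizing z with
  | zero => simp [powDivDerivNum, div_pow]
  | succ q ih =>
    set V := powDivDerivNum P G p q
    have hnear : iteratedDeriv q (fun w => (P.eval w / G.eval w) ^ p) =ᶠ[𝓝 z]
        fun w => V.eval w / (G ^ (p + q)).eval w :=
      (G.continuous.continuousAt.eventually_ne hz).mono fun w hw => by simp only [ih hw, eval_pow]
    have hGn : (G ^ (p + q)).eval z ≠ 0 := by rw [eval_pow]; exact pow_ne_zero _ hz
    have hsq := congrArg (eval z) (derivative_pow_mul_self G (p + q))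
    simp only [eval_mul, eval_C, eval_pow] at hsq
    rw [iteratedDeriv_succ, hnear.deriv_eq,
      ((V.hasDerivAt z).fun_div ((G ^ (p + q)).hasDerivAt z) hGn).deriv]
    simp only [powDivDerivNum, eval_sub, eval_mul, eval_C, eval_pow] at hGn ⊢
    rw [div_eq_div_iff (pow_ne_zero _ hGn) (pow_ne_zero _ hz)]
    linear_combination -(eval z V * eval z G ^ (p + q)) * hsq

theorem X_sub_C_mul_derivative_pow_mul {R : Type*} [CommRing R] (c : R) (k : ℕ) (U : R[X]) :
    (X - C c) * derivative ((X - C c) ^ k * U) =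
      (X - C c) ^ k * (C (k : R) * U + (X - C c) * derivative U) := by
  have h := derivative_pow_mul_self (X - C c) k
  rw [derivative_sub, derivative_X, derivative_C, sub_zero, mul_one] at h
  rw [derivative_mul]
  linear_combination U * h

theorem exists_powDivDerivNum_eq_X_sub_C_pow_mul {K : Type*} [Field K] [CharZero K]
    {P G Gc : K[X]} {c : K} {m p q : ℕ} (hm : 1 ≤ m) (hqp : q ≤ p)
    (hG : G = (X - C c) ^ m * Gc) (hGc : Gc.eval c ≠ 0) (hP : P.eval c ≠ 0) :
    ∃ U : K[X], powDivDerivNum P G p q = (X - C c) ^ (q * (m - 1)) * U ∧ U.eval c ≠ 0 := by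
  induction q with
  | zero => exact ⟨P ^ p, by simp [powDivDerivNum], by simpa using pow_ne_zero p hP⟩
  | succ q ih =>
    obtain ⟨U, hU, hUc⟩ := ih (by omega)
    set S := X - C c
    set a := q * (m - 1)
    refine ⟨(C (a : K) * U + S * derivative U) * Gc -
      C ((p + q : ℕ) : K) * U * (C (m : K) * Gc + S * derivative Gc), ?_, ?_⟩
    · apply mul_left_cancel₀ (X_sub_C_ne_zero c)
      have hexp : (q + 1) * (m - 1) + 1 = a + m := by
        obtain ⟨m', rfl⟩ := Nat.exists_eq_add_of_le' hm; simp only [a, Nat.add_sub_cancel]; ring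
      calc S * powDivDerivNum P G p (q + 1)
          = S * derivative (S ^ a * U) * (S ^ m * Gc) -
              C ((p + q : ℕ) : K) * (S ^ a * U) * (S * derivative (S ^ m * Gc)) := by
            rw [powDivDerivNum, ← hU, ← hG]; ring
        _ = S ^ (a + m) * ((C (a : K) * U + S * derivative U) * Gc -
              C ((p + q : ℕ) : K) * U * (C (m : K) * Gc + S * derivative Gc)) := by
            rw [X_sub_C_mul_derivative_pow_mul, X_sub_C_mul_derivative_pow_mul]; ring
        _ = _ := by rw [← hexp, pow_succ]; ring
    · have hlt : a < (p + q) * m := by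
        have : q * (m - 1) < (q + 1) * m := by
          obtain ⟨m', rfl⟩ := Nat.exists_eq_add_of_le' hm; simp only [Nat.add_sub_cancel]; nlinarith
        calc a < (q + 1) * m := this
          _ ≤ (p + q) * m := Nat.mul_le_mul_right _ (by omega)
      have hcoef : (a : K) - ((p + q : ℕ) : K) * m ≠ 0 := by
        rw [sub_ne_zero]; exact_mod_cast hlt.ne
      have hS : S.eval c = 0 := by simp [S]
      simp only [eval_sub, eval_mul, eval_add, eval_C, hS, zero_mul, add_zero]
      convert mul_ne_zero (mul_ne_zero hcoef hUc) hGc using 1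
      ring

theorem natDegree_derivative_mul_le {R : Type*} [CommRing R] (a b : R[X]) :
    (derivative a * b).natDegree ≤ a.natDegree + b.natDegree - 1 := by
  by_cases ha : a.natDegree = 0
  · simp [derivative_of_natDegree_zero ha]
  · have := natDegree_derivative_le a
    have := natDegree_mul_le (p := derivative a) (q := b)
    omega

theorem natDegree_powDivDerivNum_add_le {R : Type*} [CommRing R] (P G : R[X]) (p q : ℕ)
    (hG : 1 ≤ G.natDegree) :
    (powDivDerivNum P G p q).natDegree + q ≤ p * P.natDegree + q * G.natDegree := by
  induction q with
  | zero => simpa [powDivDerivNum] using natDegree_pow_le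
  | succ q ih =>
    set V := powDivDerivNum P G p q
    have h1 := natDegree_derivative_mul_le V G
    have h2 :
        (C ((p + q : ℕ) : R) * V * derivative G).natDegree ≤ V.natDegree + G.natDegree - 1 := by
      rw [mul_comm]
      refine (natDegree_derivative_mul_le G _).trans ?_
      have := natDegree_C_mul_le ((p + q : ℕ) : R) V
      omega
    have h3 := natDegree_sub_le (derivative V * G) (C ((p + q : ℕ) : R) * V * derivative G)
    have h4 := h3.trans (max_le h1 h2)
    change (derivative V * G - C ((p + q : ℕ) : R) * V * derivative G).natDegree + (q + 1) ≤ _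
    rw [Nat.succ_mul]
    omega

section QopNum

variable (p₀ k : ℕ) (p q : Fin k → ℕ)

noncomputable def QopNum {R : Type*} [CommRing R] (P G : R[X]) : R[X] :=
  P ^ p₀ * ∏ i, powDivDerivNum P G (p i) (q i)

theorem Qop_div_eval (P G : ℂ[X]) {z : ℂ} (hz : G.eval z ≠ 0) :
    Qop p₀ k p q (fun w => P.eval w / G.eval w) z =
      (QopNum p₀ k p q P G).eval z / G.eval z ^ (p₀ + ∑ i, (p i + q i)) := by
  simp only [Qop, QopNum, eval_mul, eval_pow, eval_prod]
  rw [Finset.prod_congr rfl fun i _ => iteratedDeriv_pow_div_eval P G (p i) (q i) hz,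
    Finset.prod_div_distrib, Finset.prod_pow_eq_pow_sum, div_pow, pow_add]
  ring

variable {p₀ k p q}

theorem natDegree_QopNum_add_le {R : Type*} [CommRing R] (P G : R[X]) (hG : 1 ≤ G.natDegree) :
    (QopNum p₀ k p q P G).natDegree + ∑ i, q i ≤
      (p₀ + ∑ i, p i) * P.natDegree + (∑ i, q i) * G.natDegree := by
  have hprod := natDegree_prod_le (s := Finset.univ) (f := fun i => powDivDerivNum P G (p i) (q i))
  have hsum : ∑ i, (powDivDerivNum P G (p i) (q i)).natDegree + ∑ i, q i ≤
      (∑ i, p i) * P.natDegree + (∑ i, q i) * G.natDegree := by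
    simp only [Finset.sum_mul, ← Finset.sum_add_distrib]
    exact Finset.sum_le_sum fun i _ => natDegree_powDivDerivNum_add_le P G (p i) (q i) hG
  have hmul := natDegree_mul_le (p := P ^ p₀) (q := ∏ i, powDivDerivNum P G (p i) (q i))
  have hpow := natDegree_pow_le (p := P) (n := p₀)
  rw [QopNum, add_mul]
  omega

theorem exists_QopNum_eq_X_sub_C_pow_mul {K : Type*} [Field K] [CharZero K] (hpq : ∀ i, q i ≤ p i)
    {P G Gc : K[X]} {c : K} {m : ℕ} (hm : 1 ≤ m)
    (hG : G = (X - C c) ^ m * Gc) (hGc : Gc.eval c ≠ 0) (hP : P.eval c ≠ 0) :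
    ∃ U : K[X], QopNum p₀ k p q P G = (X - C c) ^ ((∑ i, q i) * (m - 1)) * U ∧ U.eval c ≠ 0 := by
  choose U hU hUc using fun i => exists_powDivDerivNum_eq_X_sub_C_pow_mul hm (hpq i) hG hGc hP
  refine ⟨P ^ p₀ * ∏ i, U i, ?_, ?_⟩
  · simp only [QopNum, hU, Finset.prod_mul_distrib, Finset.prod_pow_eq_pow_sum, Finset.sum_mul]
    ring
  · simp [eval_prod, Finset.prod_ne_zero_iff, hP, hUc]

end QopNum

theorem exists_Qop_eq_div_prodXSubCPow {p₀ k : ℕ} {p q : Fin k → ℕ} (hpq : ∀ i, q i ≤ p i)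
    {ι : Type*} [Fintype ι] [Nonempty ι] {c : ι → ℂ} (hc : Function.Injective c)
    {m : ι → ℕ} (hm : ∀ j, 1 ≤ m j) {P : ℂ[X]} (hP : ∀ j, P.eval (c j) ≠ 0) :
    ∃ F : ℂ[X], (∀ j, F.eval (c j) ≠ 0) ∧
      F.natDegree + ∑ i, q i ≤ (p₀ + ∑ i, p i) * P.natDegree + (∑ i, q i) * Fintype.card ι ∧
      ∀ z, (∀ j, z ≠ c j) → Qop p₀ k p q (fun w => P.eval w / (prodXSubCPow c m).eval w) z =
        F.eval z / (prodXSubCPow c fun j => (p₀ + ∑ i, p i) * m j + ∑ i, q i).eval z := by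
  classical
  obtain ⟨F, hF, hFc⟩ := exists_eq_prodXSubCPow_mul c hc (k := fun j => (∑ i, q i) * (m j - 1))
    fun j => by
      obtain ⟨Gc, hG, hGc⟩ := prodXSubCPow_eq_X_sub_C_pow_mul c hc m j
      exact exists_QopNum_eq_X_sub_C_pow_mul (p₀ := p₀) hpq (hm j) hG hGc (hP j)
  refine ⟨F, hFc, ?_, fun z hz => ?_⟩
  · obtain ⟨j⟩ := ‹Nonempty ι›
    have hF0 : F ≠ 0 := fun h0 => hFc j (by rw [h0, eval_zero])
    have hG1 : 1 ≤ (prodXSubCPow c m).natDegree := by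
      rw [natDegree_prodXSubCPow]
      exact (hm j).trans (Finset.single_le_sum (fun i _ => Nat.zero_le (m i)) (Finset.mem_univ j))
    have hdeg := natDegree_QopNum_add_le (p₀ := p₀) (q := q) (p := p) P _ hG1
    have hcard : ∑ j, (m j - 1) + Fintype.card ι = ∑ j, m j := by
      rw [← Finset.card_univ, Finset.card_eq_sum_ones, ← Finset.sum_add_distrib]
      exact Finset.sum_congr rfl fun j _ => Nat.sub_add_cancel (hm j)
    rw [hF, natDegree_mul (prodXSubCPow_ne_zero c _) hF0, natDegree_prodXSubCPow,
      natDegree_prodXSubCPow, ← hcard, ← Finset.mul_sum, mul_add] at hdeg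
    omega
  · have hexp : (fun j => m j * (p₀ + ∑ i, (p i + q i))) =
        (fun j => (∑ i, q i) * (m j - 1)) + fun j => (p₀ + ∑ i, p i) * m j + ∑ i, q i := by
      funext j
      simp only [Pi.add_apply, Finset.sum_add_distrib]
      zify [hm j]
      ring
    rw [Qop_div_eval _ _ _ _ _ _ (eval_prodXSubCPow_ne_zero c m hz), hF, ← eval_pow,
      prodXSubCPow_pow, hexp, ← prodXSubCPow_mul, eval_mul, eval_mul,
      mul_div_mul_left _ _ (eval_prodXSubCPow_ne_zero c _ hz)]

theorem exists_le_card_Qop_div_eq_eval {p₀ k : ℕ} {p q : Fin k → ℕ} (hpq : ∀ i, q i ≤ p i)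
    (hq : 0 < ∑ i, q i) {ι : Type*} [Fintype ι] [Nonempty ι] {c : ι → ℂ}
    (hc : Function.Injective c) {m : ι → ℕ} (hm : ∀ j, 1 ≤ m j) {P : ℂ[X]}
    (hP : ∀ j, P.eval (c j) ≠ 0) (hdeg : P.natDegree + Fintype.card ι ≤ ∑ j, m j)
    {h : ℂ[X]} (hh : h ≠ 0) :
    ∃ S : Finset ℂ, p₀ + ∑ i, p i + ∑ i, q i ≤ S.card ∧ ∀ z ∈ S, (∀ j, z ≠ c j) ∧
      Qop p₀ k p q (fun w => P.eval w / (prodXSubCPow c m).eval w) z = h.eval z := by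
  obtain ⟨F, hFc, hFdeg, hQ⟩ := exists_Qop_eq_div_prodXSubCPow (p₀ := p₀) hpq hc hm hP
  set d := p₀ + ∑ i, p i
  set e := ∑ i, q i
  set Gs := prodXSubCPow c fun j => d * m j + e
  have hGsdeg : Gs.natDegree = d * ∑ j, m j + e * Fintype.card ι := by
    rw [natDegree_prodXSubCPow, Finset.sum_add_distrib, ← Finset.mul_sum, Finset.sum_const,
      Finset.card_univ, smul_eq_mul, mul_comm e]
  have hed : e ≤ d := (Finset.sum_le_sum fun i _ => hpq i).trans (Nat.le_add_left _ _)
  have hι : 1 ≤ Fintype.card ι := Fintype.card_pos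
  have hdι : d + Fintype.card ι ≤ d * Fintype.card ι + 1 := by nlinarith
  have hdM := Nat.mul_le_mul_left d hdeg
  have hF0 : F ≠ 0 := fun h0 => hFc (Classical.arbitrary ι) (by rw [h0, eval_zero])
  have hlt : F.natDegree < (h * Gs).natDegree := by
    rw [natDegree_mul hh (prodXSubCPow_ne_zero _ _), hGsdeg]
    nlinarith
  have hcount := natDegree_add_one_le_card_roots_sub_mul hF0 (isCoprime_prodXSubCPow _ hFc _) hlt
  have hroots := card_roots_toFinset_prodXSubCPow_le c fun j => d * m j + e
  refine ⟨(F - h * Gs).roots.toFinset, by nlinarith, fun z hz => ?_⟩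
  obtain ⟨-, hz⟩ := mem_roots'.mp (Multiset.mem_toFinset.mp hz)
  have hFz : F.eval z = h.eval z * Gs.eval z := by simpa [sub_eq_zero] using hz
  have hzc : ∀ j, z ≠ c j := by
    rintro j rfl
    have hGs : Gs.eval (c j) = 0 := eval_prodXSubCPow_self c (Nat.add_pos_right _ hq).ne'
    exact hFc j (by rw [hFz, hGs, mul_zero])
  refine ⟨hzc, ?_⟩
  rw [hQ z hzc, hFz, mul_div_cancel_right₀ _ (eval_prodXSubCPow_ne_zero _ _ hzc)]

theorem stmt7_general (s t : ℕ) (ht : 1 ≤ t) (A : ℂ) (hA : A ≠ 0)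
    (α : Fin s → ℂ) (β : Fin t → ℂ) (hβ : Function.Injective β)
    (hαβ : ∀ i j, α i ≠ β j)
    (n : Fin s → ℕ) (m : Fin t → ℕ) (hm : ∀ i, 1 ≤ m i)
    (N M : ℕ) (hN : N = ∑ i, n i) (hM : M = ∑ i, m i) (hMN : N + t ≤ M)
    (h : Polynomial ℂ) (hh : h ≠ 0)
    (k p₀ : ℕ) (p q : Fin k → ℕ) (hpq : ∀ i, q i ≤ p i) (hq : 0 < ∑ i, q i)
    (d w : ℕ) (hd : d = p₀ + ∑ i, p i) (hw : w = d + ∑ i, q i) :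
    ∃ S : Finset ℂ, w ≤ S.card ∧ ∀ z ∈ S, (∀ i, z + β i ≠ 0) ∧
      Qop p₀ k p q (fun w' => A * (∏ i, (w' + α i) ^ n i) / ∏ i, (w' + β i) ^ m i) z =
        h.eval z := by
  have : Nonempty (Fin t) := ⟨⟨0, ht⟩⟩
  set P : ℂ[X] := C A * prodXSubCPow (fun i => -α i) n
  have hR : (fun w' => A * (∏ i, (w' + α i) ^ n i) / ∏ i, (w' + β i) ^ m i) =
      fun w' => P.eval w' / (prodXSubCPow (fun j => -β j) m).eval w' := by
    funext; simp [P, prodXSubCPow, eval_prod]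
  have hP : ∀ j, P.eval (-β j) ≠ 0 := fun j => by
    simpa [P, hA] using
      eval_prodXSubCPow_ne_zero (fun i => -α i) n fun i => by simpa using (hαβ i j).symm
  have hPdeg : P.natDegree = N := by simp [P, natDegree_C_mul hA, natDegree_prodXSubCPow, hN]
  obtain ⟨S, hS, hSeq⟩ := exists_le_card_Qop_div_eq_eval (p₀ := p₀) hpq hq
    (c := fun j => -β j) (neg_injective.comp hβ) hm hP (by simpa [hPdeg, hM] using hMN) hh
  refine ⟨S, hw ▸ hd ▸ hS, fun z hz => ?_⟩
  obtain ⟨hzc, hQ⟩ := hSeq z hz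
  exact ⟨fun j hj => hzc j (eq_neg_of_add_eq_zero_left hj), hR ▸ hQ⟩

/-- Lemma 2.2: for a rational function `R(z) = A Π(z+αᵢ)^{nᵢ} / Π(z+βᵢ)^{mᵢ}` with
`M - N ≥ t` and a nonzero polynomial `h`, the function `Q[R] - h` has at least `w`
distinct zeros in `ℂ`, where `w` is the weight of `Q`. -/
theorem stmt7 (s t : ℕ) (hs : 1 ≤ s) (ht : 1 ≤ t) (A : ℂ) (hA : A ≠ 0)
    (α : Fin s → ℂ) (β : Fin t → ℂ) (hα : Function.Injective α) (hβ : Function.Injective β)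
    (hαβ : ∀ i j, α i ≠ β j)
    (n : Fin s → ℕ) (m : Fin t → ℕ) (hn : ∀ i, 1 ≤ n i) (hm : ∀ i, 1 ≤ m i)
    (N M : ℕ) (hN : N = ∑ i, n i) (hM : M = ∑ i, m i) (hMN : N + t ≤ M)
    (h : Polynomial ℂ) (hh : h ≠ 0)
    (k p₀ : ℕ) (p q : Fin k → ℕ) (hpq : ∀ i, q i ≤ p i) (hq : 0 < ∑ i, q i)
    (d w : ℕ) (hd : d = p₀ + ∑ i, p i) (hw : w = d + ∑ i, q i) :
    ∃ S : Finset ℂ, w ≤ S.card ∧ ∀ z ∈ S, (∀ i, z + β i ≠ 0) ∧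
      Qop p₀ k p q (fun w' => A * (∏ i, (w' + α i) ^ n i) / ∏ i, (w' + β i) ^ m i) z =
        h.eval z :=
  stmt7_general s t ht A hA α β hβ hαβ n m hm N M hN hM hMN h hh k p₀ p q hpq hq d w hd hw
end

section
/- Let f(z) = c/Π_{i=1}^{t}(z + β_i)^{m_i} be a non-vanishing rational function with c ≠ 0, distinct β_i, and each m_i ≥ 2. Then for the differential operator Q[f] = f^{p_0}(f^{p_1})^{(q_1)} ⋯ (f^{p_k})^{(q_k)} of degree d and weight w (p_i ≥ q_i, Σ q_i > 0), each β_i is a pole of Q[f] of order exactly (m_i − 1)d + w, and Q[f] vanishes at infinity to order at least M·d + (w − d) − t(w − d), where M = Σ m_i. -/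
/-!
Near `-βᵢ` the function `f` has a pole of order `mᵢ`, so `f^p` has one of order `mᵢ p`, and each
derivative raises a nonzero pole order by one; orders add under products, which gives
`mᵢ p₀ + Σ (mᵢ pᵢ + qᵢ) = (mᵢ - 1) d + w`. At infinity `f = O(z^{-M})`, and Cauchy's estimate on
the disc of radius `|z| / 2` shows that the `q`-th derivative of a function that is `O(z^{-N})`
is `O(z^{-N-q})`. Hence `Q[f] = O(z^{-(M d + w - d)})`, which is at least as strong as the bound
with exponent `M d + (w - d) - t (w - d)`.
-/

open Filter

open Asymptotics Bornology Metric

section PoleOrder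

variable {𝕜 : Type*} [NontriviallyNormedField 𝕜]

theorem meromorphicOrderAt_div_prod_pow {ι : Type*} [Fintype ι] [DecidableEq ι] {c : 𝕜}
    (hc : c ≠ 0) {β : ι → 𝕜} (hβ : Function.Injective β) (m : ι → ℕ) (i : ι) :
    meromorphicOrderAt (fun z => c / ∏ j, (z + β j) ^ m j) (-β i) = ↑(-(m i : ℤ)) := by
  have hrest : AnalyticAt 𝕜 (fun z => ∏ j ∈ Finset.univ.erase i, (z + β j) ^ m j) (-β i) := by
    fun_prop
  have hrest_ne : ∏ j ∈ Finset.univ.erase i, (-β i + β j) ^ m j ≠ 0 :=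
    Finset.prod_ne_zero_iff.mpr fun j hj => pow_ne_zero _ fun h =>
      (Finset.ne_of_mem_erase hj) (hβ (neg_add_eq_zero.mp h)).symm
  rw [meromorphicOrderAt_eq_int_iff (by fun_prop)]
  refine ⟨fun z => c / ∏ j ∈ Finset.univ.erase i, (z + β j) ^ m j,
    analyticAt_const.div hrest hrest_ne, div_ne_zero hc hrest_ne, .of_forall fun z => ?_⟩
  -- the identity holds even at `z = -β i`, where both sides are junk values `0`
  rw [← Finset.mul_prod_erase _ _ (Finset.mem_univ i), div_mul_eq_div_div_swap, smul_eq_mul,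
    zpow_neg, zpow_natCast, sub_neg_eq_add, div_eq_inv_mul _ ((z + β i) ^ m i)]

variable [CharZero 𝕜]

theorem meromorphicOrderAt_iteratedDeriv {E : Type*} [NormedAddCommGroup E] [NormedSpace 𝕜 E]
    [CompleteSpace E] {f : 𝕜 → E} {x : 𝕜} {n : ℤ} (hn : n < 0)
    (hf : meromorphicOrderAt f x = n) (q : ℕ) :
    meromorphicOrderAt (iteratedDeriv q f) x = ↑(n - q) := by
  induction q with
  | zero => simpa using hf
  | succ q ih =>
    rw [iteratedDeriv_succ, meromorphicOrderAt_deriv_eq_sub_one _ ih]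
    · congr 1; push_cast; ring
    · exact_mod_cast (show n - q ≠ 0 by omega)

theorem meromorphicOrderAt_iteratedDeriv_pow [CompleteSpace 𝕜] {f : 𝕜 → 𝕜} {x : 𝕜} {n : ℤ}
    (hn : n < 0) (hf : meromorphicOrderAt f x = n) {p q : ℕ} (hqp : q ≤ p) :
    meromorphicOrderAt (iteratedDeriv q (f ^ p)) x = ↑(n * p - q) := by
  obtain rfl | hp := Nat.eq_zero_or_pos p
  · obtain rfl : q = 0 := by omega
    classical
    simp
  · have hfp : meromorphicOrderAt (f ^ p) x = ↑(n * p) := by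
      have hmer := meromorphicAt_of_meromorphicOrderAt_ne_zero (f := f) (x := x)
        (by rw [hf]; exact_mod_cast hn.ne)
      rw [meromorphicOrderAt_pow hmer, hf, mul_comm]
      norm_cast
    exact meromorphicOrderAt_iteratedDeriv (by nlinarith) hfp q

end PoleOrder

theorem Qop_eq_mul_prod (p₀ k : ℕ) (p q : Fin k → ℕ) (f : ℂ → ℂ) :
    Qop p₀ k p q f = f ^ p₀ * ∏ i, iteratedDeriv (q i) (f ^ p i) := by
  funext z
  simp only [Qop, Pi.mul_apply, Pi.pow_apply, Finset.prod_apply]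
  rfl

theorem MeromorphicAt.Qop {f : ℂ → ℂ} {x : ℂ} (hf : MeromorphicAt f x) (p₀ k : ℕ)
    (p q : Fin k → ℕ) : MeromorphicAt (Qop p₀ k p q f) x := by
  rw [Qop_eq_mul_prod]
  refine (hf.pow p₀).mul (.prod fun i _ => ?_)
  rw [iteratedDeriv_eq_iterate]
  exact (hf.pow _).iterated_deriv

theorem meromorphicOrderAt_Qop {f : ℂ → ℂ} {x : ℂ} {n : ℤ} (hn : n < 0)
    (hf : meromorphicOrderAt f x = n) {p₀ k : ℕ} {p q : Fin k → ℕ} (hpq : ∀ i, q i ≤ p i) :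
    meromorphicOrderAt (Qop p₀ k p q f) x = ↑(n * (p₀ + ∑ i, p i) - ∑ i, q i) := by
  have hmer : MeromorphicAt f x :=
    meromorphicAt_of_meromorphicOrderAt_ne_zero (by rw [hf]; exact_mod_cast hn.ne)
  have hder (i : Fin k) : MeromorphicAt (iteratedDeriv (q i) (f ^ p i)) x := by
    rw [iteratedDeriv_eq_iterate]
    exact (hmer.pow _).iterated_deriv
  rw [Qop_eq_mul_prod, meromorphicOrderAt_mul (hmer.pow p₀) (.prod fun i _ => hder i),
    meromorphicOrderAt_pow hmer, meromorphicOrderAt_prod fun i _ => hder i, hf]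
  simp only [meromorphicOrderAt_iteratedDeriv_pow hn hf (hpq _)]
  norm_cast
  push_cast [Finset.sum_sub_distrib, ← Finset.mul_sum]
  ring

theorem isBigO_iteratedDeriv_inv_pow {F : Type*} [NormedAddCommGroup F] [NormedSpace ℂ F]
    [CompleteSpace F] {g : ℂ → F} {N : ℕ}
    (hg : ∀ᶠ z in cobounded ℂ, DifferentiableAt ℂ g z)
    (hO : g =O[cobounded ℂ] fun z => z⁻¹ ^ N) (q : ℕ) :
    iteratedDeriv q g =O[cobounded ℂ] fun z => z⁻¹ ^ (N + q) := by
  obtain ⟨C, hC0, hC⟩ := hO.exists_nonneg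
  obtain ⟨R, -, hR⟩ := hasBasis_cobounded_norm.eventually_iff.mp (hg.and hC.bound)
  refine .of_bound (q.factorial * C * 2 ^ (N + q)) ?_
  filter_upwards [eventually_cobounded_le_norm (max (2 * R) 1)] with z hz
  set r := ‖z‖ / 2 with hr_def
  have hr : 0 < r := by have := le_max_right (2 * R) 1; linarith
  have hRr : R ≤ r := by have := le_max_left (2 * R) 1; linarith
  have hball : ∀ w ∈ closedBall z r, r ≤ ‖w‖ := fun w hw => by
    have := norm_sub_norm_le z w
    rw [mem_closedBall, dist_eq_norm'] at hw
    linarith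
  have hdiff : DiffContOnCl ℂ g (ball z r) := by
    refine DifferentiableOn.diffContOnCl fun w hw => ?_
    rw [closure_ball z hr.ne'] at hw
    exact (hR (hRr.trans (hball w hw))).1.differentiableWithinAt
  have hsphere : ∀ w ∈ sphere z r, ‖g w‖ ≤ C / r ^ N := fun w hw => by
    have hw' := hball w (sphere_subset_closedBall hw)
    calc ‖g w‖ ≤ C * ‖w⁻¹ ^ N‖ := (hR (hRr.trans hw')).2
      _ = C / ‖w‖ ^ N := by rw [norm_pow, norm_inv, inv_pow, div_eq_mul_inv]
      _ ≤ C / r ^ N := by gcongr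
  calc ‖iteratedDeriv q g z‖ ≤ q.factorial * (C / r ^ N) / r ^ q :=
        Complex.norm_iteratedDeriv_le_of_forall_mem_sphere_norm_le q hr hdiff hsphere
    _ = q.factorial * C * 2 ^ (N + q) * ‖z⁻¹ ^ (N + q)‖ := by
        simp only [r, norm_pow, norm_inv, div_pow]
        field_simp
        ring

theorem isBigO_inv_add_const {𝕜 : Type*} [NormedField 𝕜] (b : 𝕜) :
    (fun z => (z + b)⁻¹) =O[cobounded 𝕜] fun z => z⁻¹ := by
  have h : (fun z => z + b) ~[cobounded 𝕜] (id : 𝕜 → 𝕜) := by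
    refine (isLittleO_const_left (c := b).mpr (.inr tendsto_norm_cobounded_atTop)).congr_left
      fun z => ?_
    simp
  exact h.inv.isBigO

theorem isBigO_div_prod_pow {𝕜 ι : Type*} [NormedField 𝕜] [Fintype ι] (c : 𝕜) (β : ι → 𝕜)
    (m : ι → ℕ) :
    (fun z => c / ∏ j, (z + β j) ^ m j) =O[cobounded 𝕜] fun z => z⁻¹ ^ ∑ j, m j := by
  have h := (IsBigO.finsetProd fun j (_ : j ∈ Finset.univ) =>
    (isBigO_inv_add_const (β j)).pow (m j)).const_mul_left c
  simpa [div_eq_mul_inv, Finset.prod_inv_distrib, Finset.prod_pow_eq_pow_sum] using h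

theorem eventually_differentiableAt_div_prod_pow {𝕜 ι : Type*} [NontriviallyNormedField 𝕜]
    [Fintype ι] (c : 𝕜) (β : ι → 𝕜) (m : ι → ℕ) :
    ∀ᶠ z in cobounded 𝕜, DifferentiableAt 𝕜 (fun z => c / ∏ j, (z + β j) ^ m j) z := by
  filter_upwards [eventually_all.mpr fun j => eventually_ne_cobounded (-β j)] with z hz
  exact (differentiableAt_const c).div (by fun_prop) (Finset.prod_ne_zero_iff.mpr fun j _ =>
    pow_ne_zero _ fun h => hz j (eq_neg_of_add_eq_zero_left h))

theorem isBigO_Qop {f : ℂ → ℂ} {M : ℕ} (hf : ∀ᶠ z in cobounded ℂ, DifferentiableAt ℂ f z)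
    (hO : f =O[cobounded ℂ] fun z => z⁻¹ ^ M) (p₀ k : ℕ) (p q : Fin k → ℕ) :
    Qop p₀ k p q f =O[cobounded ℂ] fun z => z⁻¹ ^ (M * (p₀ + ∑ i, p i) + ∑ i, q i) := by
  have hpow (n : ℕ) : (fun z => f z ^ n) =O[cobounded ℂ] fun z => z⁻¹ ^ (M * n) :=
    (hO.pow n).congr_right fun z => by rw [pow_mul]
  have hder (i : Fin k) : iteratedDeriv (q i) (fun z => f z ^ p i) =O[cobounded ℂ]
      fun z => z⁻¹ ^ (M * p i + q i) :=
    isBigO_iteratedDeriv_inv_pow (hf.mono fun z hz => hz.pow _) (hpow _) _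
  refine ((hpow p₀).mul (IsBigO.finsetProd fun i _ => hder i)).congr (fun z => rfl) fun z => ?_
  rw [Finset.prod_pow_eq_pow_sum, ← pow_add, Finset.sum_add_distrib, ← Finset.mul_sum]
  ring

theorem Asymptotics.IsBigO.exists_eventually_norm_le_div_zpow {𝕜 E : Type*} [NormedField 𝕜]
    [SeminormedAddCommGroup E] {f : 𝕜 → E} {N : ℕ}
    (h : f =O[cobounded 𝕜] fun z => z⁻¹ ^ N) {e : ℤ} (he : e ≤ N) :
    ∃ C : ℝ, ∀ᶠ z in cobounded 𝕜, ‖f z‖ ≤ C / ‖z‖ ^ e := by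
  obtain ⟨C, hC0, hC⟩ := h.exists_nonneg
  refine ⟨C, ?_⟩
  filter_upwards [hC.bound, eventually_cobounded_le_norm 1] with z hz h1
  calc ‖f z‖ ≤ C / ‖z‖ ^ (N : ℤ) := by simpa [div_eq_mul_inv] using hz
    _ ≤ C / ‖z‖ ^ e := by gcongr

theorem stmt14_general (t : ℕ) (c : ℂ) (hc : c ≠ 0) (β : Fin t → ℂ)
    (hβ : Function.Injective β) (m : Fin t → ℕ) (hm : ∀ i, 2 ≤ m i)
    (k p₀ : ℕ) (p q : Fin k → ℕ) (hpq : ∀ i, q i ≤ p i)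
    (d w M : ℕ) (hd : d = p₀ + ∑ i, p i) (hw : w = d + ∑ i, q i) (hM : M = ∑ i, m i) :
    (∀ i : Fin t,
      ∃ h : MeromorphicAt (Qop p₀ k p q (fun z => c / ∏ j, (z + β j) ^ m j)) (-(β i)),
        meromorphicOrderAt (Qop p₀ k p q (fun z => c / ∏ j, (z + β j) ^ m j)) (-(β i)) =
          -((((m i : ℤ) - 1) * d + w) : ℤ)) ∧
    ∃ C : ℝ, ∀ᶠ z : ℂ in Bornology.cobounded ℂ,
      ‖Qop p₀ k p q (fun z' => c / ∏ j, (z' + β j) ^ m j) z‖ ≤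
        C / ‖z‖ ^ ((M : ℤ) * d + ((w : ℤ) - d) - t * ((w : ℤ) - d)) := by
  refine ⟨fun i => ?_, ?_⟩
  · have hpole := meromorphicOrderAt_div_prod_pow hc hβ m i
    have hneg : -(m i : ℤ) < 0 := by have := hm i; omega
    refine ⟨(meromorphicAt_of_meromorphicOrderAt_ne_zero
      (by rw [hpole]; exact_mod_cast hneg.ne)).Qop .., ?_⟩
    rw [meromorphicOrderAt_Qop hneg hpole hpq, ← WithTop.LinearOrderedAddCommGroup.coe_neg]
    congr 1
    subst hw hd
    push_cast
    ring
  · refine (isBigO_Qop (eventually_differentiableAt_div_prod_pow c β m)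
      (isBigO_div_prod_pow c β m) p₀ k p q).exists_eventually_norm_le_div_zpow ?_
    subst hw hd hM
    have : (0 : ℤ) ≤ t * ∑ i, (q i : ℤ) := by positivity
    push_cast
    linarith

/-- For the non-vanishing rational function `f = c / Π (z+βᵢ)^{mᵢ}` with all `mᵢ ≥ 2`,
each `-βᵢ` is a pole of `Q[f]` of order exactly `(mᵢ-1)d + w`, and `Q[f]` vanishes at
infinity to order at least `M·d + (w-d) - t(w-d)`. -/
theorem stmt14 (t : ℕ) (ht : 1 ≤ t) (c : ℂ) (hc : c ≠ 0) (β : Fin t → ℂ)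
    (hβ : Function.Injective β) (m : Fin t → ℕ) (hm : ∀ i, 2 ≤ m i)
    (k p₀ : ℕ) (p q : Fin k → ℕ) (hpq : ∀ i, q i ≤ p i) (hq : 0 < ∑ i, q i)
    (d w M : ℕ) (hd : d = p₀ + ∑ i, p i) (hw : w = d + ∑ i, q i) (hM : M = ∑ i, m i) :
    (∀ i : Fin t,
      ∃ h : MeromorphicAt (Qop p₀ k p q (fun z => c / ∏ j, (z + β j) ^ m j)) (-(β i)),
        meromorphicOrderAt (Qop p₀ k p q (fun z => c / ∏ j, (z + β j) ^ m j)) (-(β i)) =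
          -((((m i : ℤ) - 1) * d + w) : ℤ)) ∧
    ∃ C : ℝ, ∀ᶠ z : ℂ in Bornology.cobounded ℂ,
      ‖Qop p₀ k p q (fun z' => c / ∏ j, (z' + β j) ^ m j) z‖ ≤
        C / ‖z‖ ^ ((M : ℤ) * d + ((w : ℤ) - d) - t * ((w : ℤ) - d)) :=
  stmt14_general t c hc β hβ m hm k p₀ p q hpq d w M hd hw hM
end
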